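/- arXiv:2512.11433 — 3 statements merged into one kernel-verified Lean document; each statement's English description precedes it below -/
import Mathlib

section
/- (Rearrangement-based optimality of Gradient-Input ordering for Deletion with zero baseline.) For a linear model f(x) = ⟨w, x⟩ + b, a permutation u of {1,...,d} minimizes the Deletion score ∑_{k=1}^d f(x with top-k coordinates under u zeroed) if and only if the sequence w_{u(1)} x_{u(1)} ≥ w_{u(2)} x_{u(2)} ≥ ... ≥ w_{u(d)} x_{u(d)} is nonincreasing. -/
/-!
Zeroing the coordinate `u i` removes `w (u i) * x (u i)` from the model at the steps `k ≥ i`,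
so that term survives exactly at the `i` steps before, and the score is
`d * b + ∑ i, i * w (u i) * x (u i)`. Minimizing it is a rearrangement problem with
strictly increasing weights `i`: a nonincreasing order minimizes by the rearrangement
inequality, and any inversion `i < j` with `w (u i) * x (u i) < w (u j) * x (u j)` is
strictly improved by swapping `i` and `j`.
-/

/-- Deletion score with zero baseline for a linear model `y ↦ ⟨w, y⟩ + b`:
the `k`-th step evaluates the model on `x` with coordinates `u 0, …, u k` zeroed. -/
def deletionScore (d : ℕ) (w x : Fin d → ℝ) (b : ℝ) (u : Equiv.Perm (Fin d)) : ℝ :=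
  ∑ k : Fin d,
    ((∑ j, w j * (if ∃ i : Fin d, i ≤ k ∧ u i = j then 0 else x j)) + b)

open Finset Equiv

section Rearrangement

variable {ι α : Type*} [Fintype ι] [DecidableEq ι] [CommRing α]

theorem sum_mul_comp_mul_swap (c g : ι → α) (u : Perm ι) {i j : ι} (hij : i ≠ j) :
    ∑ k, c k * g ((u * swap i j) k) =
      ∑ k, c k * g (u k) - (c j - c i) * (g (u j) - g (u i)) := by
  have hdiff : ∑ k, (c k * g ((u * swap i j) k) - c k * g (u k)) =
      (c i * g (u j) - c i * g (u i)) + (c j * g (u i) - c j * g (u j)) := by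
    rw [Fintype.sum_eq_add i j hij fun k hk => by simp [swap_apply_of_ne_of_ne hk.1 hk.2]]
    simp
  rw [sum_sub_distrib] at hdiff
  linear_combination hdiff

variable [LinearOrder ι] [LinearOrder α] [IsStrictOrderedRing α]

theorem forall_sum_mul_comp_le_iff_antitone {c : ι → α} (hc : StrictMono c) (g : ι → α)
    (u : Perm ι) :
    (∀ v : Perm ι, ∑ i, c i * g (u i) ≤ ∑ i, c i * g (v i)) ↔ Antitone (g ∘ u) := by
  constructor
  · intro hmin i j hij
    by_contra! hinv
    have hlt : i < j := lt_of_le_of_ne hij (by rintro rfl; exact lt_irrefl _ hinv)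
    have hgain : 0 < (c j - c i) * (g (u j) - g (u i)) :=
      mul_pos (sub_pos.2 (hc hlt)) (sub_pos.2 hinv)
    have := hmin (u * swap i j)
    rw [sum_mul_comp_mul_swap c g u hlt.ne] at this
    linarith
  · intro hanti v
    have := (hc.monotone.antivary hanti).sum_mul_le_sum_mul_comp_perm (σ := u⁻¹ * v)
    simpa using this

end Rearrangement

theorem sum_ite_le_const {α : Type*} [NonAssocSemiring α] {n : ℕ} (m : Fin n) (a : α) :
    ∑ k : Fin n, (if m ≤ k then 0 else a) = (m : ℕ) * a := by
  simp_rw [← not_lt, ite_not]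
  rw [sum_ite, sum_const_zero, add_zero, sum_const, filter_gt_eq_Iio, Fin.card_Iio,
    nsmul_eq_mul]

theorem deletionScore_eq (d : ℕ) (w x : Fin d → ℝ) (b : ℝ) (u : Perm (Fin d)) :
    deletionScore d w x b u = d * b + ∑ i : Fin d, (i : ℕ) * (w (u i) * x (u i)) := by
  have hzeroed : ∀ k j : Fin d, (∃ i, i ≤ k ∧ u i = j) ↔ u.symm j ≤ k := fun k j =>
    ⟨by rintro ⟨i, hi, rfl⟩; simpa using hi, fun h => ⟨_, h, u.apply_symm_apply j⟩⟩
  simp only [deletionScore, hzeroed, mul_ite, mul_zero, sum_add_distrib, sum_const, card_univ,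
    Fintype.card_fin, nsmul_eq_mul]
  rw [sum_comm, add_comm]
  simp only [sum_ite_le_const]
  rw [← Equiv.sum_comp u]
  simp only [symm_apply_apply]

theorem deletion_min_iff_gradient_input_order_general (d : ℕ) (w x : Fin d → ℝ) (b : ℝ)
    (u : Equiv.Perm (Fin d)) :
    (∀ v : Equiv.Perm (Fin d), deletionScore d w x b u ≤ deletionScore d w x b v) ↔
      (∀ i j : Fin d, i ≤ j → w (u j) * x (u j) ≤ w (u i) * x (u i)) := by
  have hweight : StrictMono fun i : Fin d => ((i : ℕ) : ℝ) :=
    Nat.strictMono_cast.comp Fin.val_strictMono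
  simp only [deletionScore_eq, add_le_add_iff_left]
  exact forall_sum_mul_comp_le_iff_antitone hweight (fun j => w j * x j) u

/-- Rearrangement-based optimality of the Gradient-Input ordering for Deletion with
zero baseline: assuming the values `w j * x j` are pairwise distinct, a permutation `u`
minimizes the Deletion score over all permutations if and only if the sequence
`w (u 0) * x (u 0) ≥ w (u 1) * x (u 1) ≥ …` is nonincreasing. -/
theorem deletion_min_iff_gradient_input_order (d : ℕ) (w x : Fin d → ℝ) (b : ℝ)
    (hdist : ∀ i j : Fin d, i ≠ j → w i * x i ≠ w j * x j)
    (u : Equiv.Perm (Fin d)) :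
    (∀ v : Equiv.Perm (Fin d), deletionScore d w x b u ≤ deletionScore d w x b v) ↔
      (∀ i j : Fin d, i ≤ j → w (u j) * x (u j) ≤ w (u i) * x (u i)) :=
  deletion_min_iff_gradient_input_order_general d w x b u
end

section
/- For a linear model f(x) = ⟨w, x⟩ + b with additive uniform-noise baseline, the expected Deletion score of a permutation u equals d·(⟨w,x⟩ + b) + ∑_{i=1}^d (d − i + 1) * (1/2) * w_{u(i)}, where the k-th deletion step adds an independent Uniform[0,1] noise variable to each of the coordinates u(1),...,u(k). -/
open MeasureTheory

/-!
The score is affine in the noise `ξ`: at step `k` the input is `x` plus `ξ` on the first `k + 1`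
coordinates of `u`, so coordinate `u i` carries noise in the `d - i` steps `k ≥ i`. Summing over
the steps and taking expectations with `E[ξ j] = 1/2` gives the formula.
-/

/-- The i.i.d. Uniform[0,1] law on `ℝ^d`. -/
noncomputable def uniformNoise (d : ℕ) : Measure (Fin d → ℝ) :=
  Measure.pi fun _ => volume.restrict (Set.Icc (0 : ℝ) 1)

instance : IsProbabilityMeasure (volume.restrict (Set.Icc (0 : ℝ) 1)) :=
  ⟨by simp [Real.volume_Icc]⟩

instance (d : ℕ) : IsProbabilityMeasure (uniformNoise d) := by
  unfold uniformNoise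
  infer_instance

theorem setIntegral_Icc_zero_one_id : ∫ y in Set.Icc (0 : ℝ) 1, y = 1 / 2 := by
  rw [integral_Icc_eq_integral_Ioc, ← intervalIntegral.integral_of_le zero_le_one, integral_id]
  norm_num

theorem integrable_uniformNoise_apply (d : ℕ) (j : Fin d) :
    Integrable (fun ξ : Fin d → ℝ => ξ j) (uniformNoise d) :=
  integrable_eval continuous_id.integrableOn_Icc

theorem integral_uniformNoise_apply (d : ℕ) (j : Fin d) :
    ∫ ξ, ξ j ∂uniformNoise d = 1 / 2 := by
  rw [uniformNoise, integral_eval, setIntegral_Icc_zero_one_id]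

theorem Fin.sum_ite_le {M : Type*} [AddCommMonoid M] {n : ℕ} (a : Fin n) (c : M) :
    ∑ k : Fin n, (if a ≤ k then c else 0) = (n - a : ℕ) • c := by
  rw [← Finset.sum_filter, Finset.filter_le_eq_Ici, Finset.sum_const, Fin.card_Ici]

theorem sum_deletion_score_eq {d : ℕ} (w x ξ : Fin d → ℝ) (b : ℝ) (u : Equiv.Perm (Fin d)) :
    ∑ k : Fin d, ((∑ j, w j * (if ∃ i : Fin d, i ≤ k ∧ u i = j then x j + ξ j else x j)) + b) =
      d * ((∑ j, w j * x j) + b) + ∑ i : Fin d, ((d - (i : ℕ) : ℕ) : ℝ) * (w (u i) * ξ (u i)) := by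
  have split_noise : ∀ k j, w j * (if ∃ i : Fin d, i ≤ k ∧ u i = j then x j + ξ j else x j) =
      w j * x j + if u.symm j ≤ k then w j * ξ j else 0 := by
    intro k j
    simp only [← Equiv.eq_symm_apply, exists_eq_right]
    split_ifs <;> ring
  simp_rw [split_noise, Finset.sum_add_distrib]
  rw [Finset.sum_comm (f := fun k j => if u.symm j ≤ k then w j * ξ j else 0)]
  simp_rw [Fin.sum_ite_le, nsmul_eq_mul]
  rw [← Equiv.sum_comp u (fun j => ((d - (u.symm j : ℕ) : ℕ) : ℝ) * (w j * ξ j))]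
  simp only [Equiv.symm_apply_apply, Finset.sum_const, Finset.card_univ, Fintype.card_fin,
    nsmul_eq_mul]
  ring

-- Steps and positions are 0-based: the paper's coefficient `d − i + 1` is `d - i` here.
/-- Expected Deletion score with additive uniform-noise baseline: for a linear model
`f(y) = ⟨w, y⟩ + b`, where the `k`-th deletion step adds independent Uniform[0,1] noise
to each of the coordinates `u 0, …, u k`, the expected Deletion score of a permutation
`u` equals `d·(⟨w,x⟩ + b) + ∑_{i=1}^d (d − i + 1) * (1/2) * w_{u(i)}` (written here with
0-based indices, so the coefficient of `w (u i)` is `d − i`). -/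
theorem expected_deletion_uniform_noise (d : ℕ) (w x : Fin d → ℝ) (b : ℝ)
    (u : Equiv.Perm (Fin d)) :
    (∫ ξ, ∑ k : Fin d,
        ((∑ j, w j * (if ∃ i : Fin d, i ≤ k ∧ u i = j then x j + ξ j else x j)) + b)
        ∂(uniformNoise d)) =
      d * ((∑ j, w j * x j) + b) +
        ∑ i : Fin d, ((d - (i : ℕ) : ℕ) : ℝ) * (1 / 2) * w (u i) := by
  have integrable_term : ∀ i : Fin d, Integrable
      (fun ξ : Fin d → ℝ => ((d - (i : ℕ) : ℕ) : ℝ) * (w (u i) * ξ (u i))) (uniformNoise d) :=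
    fun i => ((integrable_uniformNoise_apply d (u i)).const_mul _).const_mul _
  simp_rw [sum_deletion_score_eq]
  rw [integral_add (integrable_const _) (integrable_finsetSum _ fun i _ => integrable_term i),
    integral_const, integral_finsetSum _ fun i _ => integrable_term i]
  simp only [integral_const_mul, integral_uniformNoise_apply, probReal_univ, one_smul]
  congr 1
  exact Finset.sum_congr rfl fun i _ => by ring
end

section
/- (Optimal orderings coincide for Insertion and Deletion with zero baseline.) For a linear model f(x) = ⟨w, x⟩ + b, a permutation u minimizes the Deletion score with zero baseline if and only if it maximizes the Insertion score with zero baseline. -/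
/-- Insertion score with zero baseline for the linear model `y ↦ ⟨w, y⟩ + b`:
the `k`-th step keeps only the coordinates `u 0, …, u k` of `x`. -/
def insertionScore (d : ℕ) (w x : Fin d → ℝ) (b : ℝ) (u : Equiv.Perm (Fin d)) : ℝ :=
  ∑ k : Fin d,
    ((∑ j, w j * (if ∃ i : Fin d, i ≤ k ∧ u i = j then x j else 0)) + b)

/- At every step the deletion input and the insertion input are complementary masks of `x`,
so by linearity their scores add up to the same value for every ordering `u`. -/
lemma deletionScore_add_insertionScore (d : ℕ) (w x : Fin d → ℝ) (b : ℝ)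
    (u : Equiv.Perm (Fin d)) :
    deletionScore d w x b u + insertionScore d w x b u = d * (∑ j, w j * x j + 2 * b) := by
  unfold deletionScore insertionScore
  rw [← Finset.sum_add_distrib]
  trans ∑ _k : Fin d, ((∑ j, w j * x j) + 2 * b : ℝ)
  · refine Finset.sum_congr rfl fun k _ => ?_
    rw [add_add_add_comm, ← Finset.sum_add_distrib, two_mul]
    congr 1
    refine Finset.sum_congr rfl fun j _ => ?_
    split_ifs <;> ring
  · simp [mul_add]

/-- Optimal orderings coincide for Insertion and Deletion with zero baseline: for a
linear model, a permutation `u` minimizes the Deletion score if and only if it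
maximizes the Insertion score. -/
theorem deletion_min_iff_insertion_max (d : ℕ) (w x : Fin d → ℝ) (b : ℝ)
    (u : Equiv.Perm (Fin d)) :
    (∀ v : Equiv.Perm (Fin d), deletionScore d w x b u ≤ deletionScore d w x b v) ↔
      (∀ v : Equiv.Perm (Fin d),
        insertionScore d w x b v ≤ insertionScore d w x b u) := by
  have hsum := deletionScore_add_insertionScore d w x b
  exact forall_congr' fun v => by constructor <;> intro h <;> linarith [hsum u, hsum v]
end
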